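/- arXiv:2402.03201 — 2 statements merged into one kernel-verified Lean document; each statement's English description precedes it below -/
import Mathlib

section
/- Let x be a random vector in ℝ^n whose coordinates are independent Gaussian random variables, each with mean μᵢ and variance σ² > 0 (i.e. x ~ N(μ, σ²·I) is an isotropic Gaussian). Then for every ε ≥ 0, P(‖x − μ‖² ≤ nσ² − 2nσ²√ε) ≤ e^{−nε}. -/
/-!
Chernoff bound for the lower tail of `S = ‖x - μ‖²`: for `t ≤ 0`, independence of the coordinates
and a Gaussian integral give `𝔼[exp (t S)] = (1 - 2σ²t)^(-n/2)`, hence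
`P(S ≤ a) ≤ exp (-t a) (1 - 2σ²t)^(-n/2)`. Taking `t = -√ε/σ²` and `a = nσ²(1 - 2√ε)`, the bound
becomes `(exp (√ε - ε) / √(1 + 2√ε))^n · exp (-nε)`, and the first factor is at most `1` by
`log (1 + u) ≥ u - u²/2` at `u = 2√ε`.
-/

open MeasureTheory ProbabilityTheory

noncomputable def isoGaussian (n : ℕ) (μ : Fin n → ℝ) (σ : ℝ) : Measure (Fin n → ℝ) :=
  Measure.pi fun i => gaussianReal (μ i) ⟨σ ^ 2, sq_nonneg σ⟩

open Real NNReal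

lemma Real.sub_sq_div_two_le_log_one_add {x : ℝ} (hx : 0 ≤ x) : x - x ^ 2 / 2 ≤ log (1 + x) := by
  refine le_trans ?_ (le_log_one_add_of_nonneg hx)
  rw [le_div_iff₀ (by positivity)]
  nlinarith [pow_nonneg hx 3]

lemma Real.exp_sub_sq_le_sqrt_one_add_two_mul {s : ℝ} (hs : 0 ≤ s) :
    exp (s - s ^ 2) ≤ √(1 + 2 * s) := by
  refine le_sqrt_of_sq_le ?_
  calc exp (s - s ^ 2) ^ 2 = exp (2 * s - (2 * s) ^ 2 / 2) := by rw [← exp_nat_mul]; ring_nf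
    _ ≤ exp (log (1 + 2 * s)) := exp_le_exp.2 (sub_sq_div_two_le_log_one_add (by positivity))
    _ = 1 + 2 * s := exp_log (by positivity)

lemma mgf_sq_sub_gaussianReal (m : ℝ) (v : ℝ≥0) {t : ℝ} (ht : 2 * v * t < 1) :
    mgf (fun x ↦ (x - m) ^ 2) (gaussianReal m v) t = (√(1 - 2 * v * t))⁻¹ := by
  rcases eq_or_ne v 0 with rfl | hv
  · simp [gaussianReal_zero_var, mgf]
  have hv' : (0 : ℝ) < v := by positivity
  set b := (1 - 2 * v * t) / (2 * v) with hb
  have hb_pos : 0 < b := div_pos (by linarith) (by positivity)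
  have hdens : ∀ x, gaussianPDFReal m v x • exp (t * (x - m) ^ 2)
      = (√(2 * π * v))⁻¹ * exp (-b * (x - m) ^ 2) := by
    intro x
    rw [gaussianPDFReal, smul_eq_mul, mul_assoc, ← exp_add]
    congr 2
    rw [hb]
    field_simp
    ring
  rw [mgf, integral_gaussianReal_eq_integral_smul hv]
  simp_rw [hdens]
  rw [integral_const_mul, integral_sub_right_eq_self (fun x ↦ exp (-b * x ^ 2)) m,
    integral_gaussian, hb, div_div_eq_mul_div, show π * (2 * v) = 2 * π * v by ring,
    sqrt_div' _ (by linarith : (0 : ℝ) ≤ 1 - 2 * v * t)]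
  have : √(2 * π * v) ≠ 0 := by positivity
  field_simp

lemma mgf_sum_comp_eval_pi {ι : Type*} [Fintype ι] {Ω : ι → Type*} [∀ i, MeasurableSpace (Ω i)]
    (ν : ∀ i, Measure (Ω i)) [∀ i, IsProbabilityMeasure (ν i)] {X : ∀ i, Ω i → ℝ}
    (hX : ∀ i, Measurable (X i)) (t : ℝ) :
    mgf (fun ω ↦ ∑ i, X i (ω i)) (Measure.pi ν) t = ∏ i, mgf (X i) (ν i) t := by
  have hindep := iIndepFun_pi (μ := ν) fun i ↦ (hX i).aemeasurable
  rw [← Finset.sum_fn, hindep.mgf_sum (fun i ↦ by fun_prop)]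
  congr! 1 with i
  exact integral_comp_eval ((hX i).const_mul t).exp.aestronglyMeasurable

-- The anonymous constructor `⟨σ ^ 2, _⟩` elaborates at type `{r : ℝ // 0 ≤ r}` rather than `ℝ≥0`,
-- so instance search does not find `IsProbabilityMeasure (gaussianReal (μ i) ⟨σ ^ 2, _⟩)`.
instance isoGaussian.instIsProbabilityMeasure (n : ℕ) (μ : Fin n → ℝ) (σ : ℝ) :
    IsProbabilityMeasure (isoGaussian n μ σ) :=
  have (i : Fin n) := instIsProbabilityMeasureGaussianReal (μ i) ⟨σ ^ 2, sq_nonneg σ⟩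
  Measure.pi.instIsProbabilityMeasure _

lemma mgf_sum_sq_sub_isoGaussian {n : ℕ} (μ : Fin n → ℝ) (σ : ℝ) {t : ℝ}
    (ht : 2 * σ ^ 2 * t < 1) :
    mgf (fun x ↦ ∑ i, (x i - μ i) ^ 2) (isoGaussian n μ σ) t = (√(1 - 2 * σ ^ 2 * t))⁻¹ ^ n := by
  have (i : Fin n) := instIsProbabilityMeasureGaussianReal (μ i) ⟨σ ^ 2, sq_nonneg σ⟩
  refine (mgf_sum_comp_eval_pi (fun i ↦ gaussianReal (μ i) ⟨σ ^ 2, sq_nonneg σ⟩)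
    (X := fun i y ↦ (y - μ i) ^ 2) (fun i ↦ by fun_prop) t).trans ?_
  simp only [mgf_sq_sub_gaussianReal _ ⟨σ ^ 2, sq_nonneg σ⟩ ht, Finset.prod_const,
    Finset.card_univ, Fintype.card_fin]
  rfl

lemma isoGaussian_sum_sq_sub_le_le_exp_mul {n : ℕ} (μ : Fin n → ℝ) (σ : ℝ) {t : ℝ} (ht : t ≤ 0)
    (a : ℝ) :
    isoGaussian n μ σ {x | ∑ i, (x i - μ i) ^ 2 ≤ a}
      ≤ ENNReal.ofReal (exp (-t * a) * (√(1 - 2 * σ ^ 2 * t))⁻¹ ^ n) := by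
  have h_int : Integrable (fun x ↦ exp (t * ∑ i, (x i - μ i) ^ 2)) (isoGaussian n μ σ) := by
    refine .of_bound (by fun_prop : Measurable _).aestronglyMeasurable 1 (ae_of_all _ fun x ↦ ?_)
    rw [norm_of_nonneg (exp_nonneg _), exp_le_one_iff]
    exact mul_nonpos_of_nonpos_of_nonneg ht (by positivity)
  rw [← ofReal_measureReal, ← mgf_sum_sq_sub_isoGaussian μ σ (by nlinarith [sq_nonneg σ])]
  exact ENNReal.ofReal_le_ofReal (measure_le_le_exp_mul_mgf a ht h_int)

/-- Laurent–Massart lower-tail bound for an isotropic Gaussian: for `x ~ N(μ, σ²·I)` and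
`ε ≥ 0`, `P(‖x - μ‖² ≤ nσ² - 2nσ²√ε) ≤ e^(-nε)`. -/
theorem isoGaussian_lower_tail {n : ℕ} (μ : Fin n → ℝ) (σ : ℝ) (hσ : 0 < σ)
    (ε : ℝ) (hε : 0 ≤ ε) :
    isoGaussian n μ σ
        {x | ∑ i, (x i - μ i) ^ 2 ≤ n * σ ^ 2 - 2 * n * σ ^ 2 * Real.sqrt ε}
      ≤ ENNReal.ofReal (Real.exp (-(n * ε))) := by
  set s := √ε
  have hs : 0 ≤ s := sqrt_nonneg ε
  have hε_eq : ε = s ^ 2 := (sq_sqrt hε).symm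
  refine (isoGaussian_sum_sq_sub_le_le_exp_mul μ σ (t := -(s / σ ^ 2))
    (neg_nonpos.2 (by positivity)) _).trans (ENNReal.ofReal_le_ofReal ?_)
  have hσ2 : σ ^ 2 ≠ 0 := by positivity
  have hexp : -(-(s / σ ^ 2)) * (n * σ ^ 2 - 2 * n * σ ^ 2 * s) = n * (s - s ^ 2) + -(n * ε) := by
    field_simp; rw [hε_eq]; ring
  have hsqrt : 1 - 2 * σ ^ 2 * -(s / σ ^ 2) = 1 + 2 * s := by field_simp; ring
  have hpos : 0 < √(1 + 2 * s) := sqrt_pos.2 (by positivity)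
  rw [hexp, hsqrt, exp_add, exp_nat_mul]
  calc exp (s - s ^ 2) ^ n * exp (-(n * ε)) * (√(1 + 2 * s))⁻¹ ^ n
      = exp (-(n * ε)) * (exp (s - s ^ 2) / √(1 + 2 * s)) ^ n := by ring
    _ ≤ exp (-(n * ε)) * 1 := by
        gcongr
        exact pow_le_one₀ (by positivity)
          ((div_le_one hpos).2 (exp_sub_sq_le_sqrt_one_add_two_mul hs))
    _ = exp (-(n * ε)) := mul_one _
end

section
/- Let x be a random vector in ℝ^n whose coordinates are independent Gaussian random variables, each with mean μᵢ and variance σ² > 0 (i.e. x ~ N(μ, σ²·I)), set r = √n · σ, and for ε ∈ [0, 1/4] define ε_max = max{ 1 − √(1 − 2√ε), √(1 + 2√ε + 2ε) − 1 }. Then P( (1 − ε_max)·r ≤ ‖x − μ‖ ≤ (1 + ε_max)·r ) ≥ 1 − 2e^{−nε}; that is, with probability at least 1 − 2e^{−nε} the vector x lies within relative distance ε_max of the sphere of radius √n·σ centered at μ. -/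
open MeasureTheory ProbabilityTheory

/-!
The squared distance `Z = ∑ i, (x i - μ i) ^ 2` has moment generating function
`(1 - 2λσ²)^(-n/2)`. The Chernoff bound with the Laurent–Massart choices `λ = √ε / ((1 + 2√ε) σ²)`
and `λ = -√ε / σ²`, together with `2x / (x + 2) ≤ log (1 + x) ≤ x (x + 2) / (2 (x + 1))`, gives
`P(Z ≥ nσ² (1 + 2√ε + 2ε)) ≤ e^(-nε)` and `P(Z ≤ nσ² (1 - 2√ε)) ≤ e^(-nε)`.
Outside these two events, taking square roots puts `‖x - μ‖` within relative distance `ε_max`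
of `√n σ`.
-/

open Real Finset
open scoped NNReal

lemma log_one_add_le_of_nonneg {x : ℝ} (hx : 0 ≤ x) :
    log (1 + x) ≤ x * (x + 2) / (2 * (x + 1)) := by
  rw [log_le_iff_le_exp (by linarith)]
  refine le_trans ?_ (quadratic_le_exp_of_nonneg (by positivity))
  have key : 1 + x * (x + 2) / (2 * (x + 1)) + (x * (x + 2) / (2 * (x + 1))) ^ 2 / 2 - (1 + x)
      = x ^ 4 / (8 * (x + 1) ^ 2) := by
    field_simp
    ring
  linarith [show 0 ≤ x ^ 4 / (8 * (x + 1) ^ 2) by positivity]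

lemma inv_sqrt_pow_eq_exp {c : ℝ} (hc : 0 < c) (n : ℕ) :
    (√c)⁻¹ ^ n = exp (-(n * log c / 2)) := by
  rw [← exp_log (sqrt_pos.2 hc), ← exp_neg, ← exp_nat_mul, log_sqrt hc.le]
  ring_nf

section gaussianReal

variable (m : ℝ) {v : ℝ≥0} {l : ℝ}

/- For `1 ≤ 2 * l * v` both sides are `0`: the integral diverges, and `√` of a nonpositive
number is `0`. -/
lemma integral_exp_mul_sq_sub_gaussianReal (hv : v ≠ 0) :
    ∫ x, exp (l * (x - m) ^ 2) ∂gaussianReal m v = (√(1 - 2 * l * v))⁻¹ := by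
  have hv0 : (0 : ℝ) < v := by positivity
  set b := (1 - 2 * l * v) / (2 * v) with hb
  have hdens : ∀ y : ℝ, gaussianPDFReal m v y • exp (l * (y - m) ^ 2)
      = (√(2 * π * v))⁻¹ * exp (-b * (y - m) ^ 2) := by
    intro y
    rw [gaussianPDFReal, smul_eq_mul, mul_assoc, ← exp_add, hb]
    congr 2
    field_simp
    ring
  simp_rw [integral_gaussianReal_eq_integral_smul hv, hdens]
  rw [integral_const_mul, integral_sub_right_eq_self (fun y => exp (-b * y ^ 2)),
    integral_gaussian, hb, ← sqrt_inv, ← sqrt_mul (by positivity), ← sqrt_inv]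
  congr 1
  field_simp

lemma integrable_exp_mul_sq_sub_gaussianReal (hv : v ≠ 0) (hl : 2 * l * v < 1) :
    Integrable (fun x => exp (l * (x - m) ^ 2)) (gaussianReal m v) := by
  refine Integrable.of_integral_ne_zero ?_
  rw [integral_exp_mul_sq_sub_gaussianReal m hv]
  exact (inv_pos.2 (sqrt_pos.2 (by linarith))).ne'

end gaussianReal

section pi

variable {ι : Type*} [Fintype ι] (μ : ι → ℝ) {v : ℝ≥0}

lemma integrable_exp_mul_sum_sq_sub_pi_gaussianReal (hv : v ≠ 0) {l : ℝ} (hl : 2 * l * v < 1) :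
    Integrable (fun x => exp (l * ∑ i, (x i - μ i) ^ 2))
      (Measure.pi fun i => gaussianReal (μ i) v) := by
  simp_rw [mul_sum, exp_sum]
  exact Integrable.fintype_prod fun i => integrable_exp_mul_sq_sub_gaussianReal (μ i) hv hl

lemma mgf_sum_sq_sub_pi_gaussianReal (hv : v ≠ 0) (l : ℝ) :
    mgf (fun x => ∑ i, (x i - μ i) ^ 2) (Measure.pi fun i => gaussianReal (μ i) v) l
      = (√(1 - 2 * l * v))⁻¹ ^ Fintype.card ι := by
  simp_rw [mgf, mul_sum, exp_sum]
  rw [integral_fintype_prod_eq_prod (f := fun i y => exp (l * (y - μ i) ^ 2))]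
  simp_rw [integral_exp_mul_sq_sub_gaussianReal _ hv]
  rw [prod_const, card_univ]

lemma measureReal_sum_sq_sub_ge_le_exp (hv : v ≠ 0) {l : ℝ} (hl0 : 0 ≤ l)
    (hl : 2 * l * v < 1) (a : ℝ) :
    (Measure.pi fun i => gaussianReal (μ i) v).real {x | a ≤ ∑ i, (x i - μ i) ^ 2}
      ≤ exp (-(l * a) - Fintype.card ι * log (1 - 2 * l * v) / 2) := by
  refine (measure_ge_le_exp_mul_mgf a hl0
    (integrable_exp_mul_sum_sq_sub_pi_gaussianReal μ hv hl)).trans_eq ?_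
  rw [mgf_sum_sq_sub_pi_gaussianReal μ hv, inv_sqrt_pow_eq_exp (by linarith), ← exp_add]
  ring_nf

lemma measureReal_sum_sq_sub_le_le_exp (hv : v ≠ 0) {l : ℝ} (hl0 : l ≤ 0) (a : ℝ) :
    (Measure.pi fun i => gaussianReal (μ i) v).real {x | ∑ i, (x i - μ i) ^ 2 ≤ a}
      ≤ exp (-(l * a) - Fintype.card ι * log (1 - 2 * l * v) / 2) := by
  have hl : 2 * l * v < 1 := by nlinarith [v.coe_nonneg]
  refine (measure_le_le_exp_mul_mgf a hl0
    (integrable_exp_mul_sum_sq_sub_pi_gaussianReal μ hv hl)).trans_eq ?_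
  rw [mgf_sum_sq_sub_pi_gaussianReal μ hv, inv_sqrt_pow_eq_exp (by linarith), ← exp_add]
  ring_nf

lemma measureReal_sum_sq_sub_upper_tail_le (hv : v ≠ 0) {s : ℝ} (hs : 0 ≤ s) :
    (Measure.pi fun i => gaussianReal (μ i) v).real
        {x | Fintype.card ι * v * (1 + 2 * s + 2 * s ^ 2) ≤ ∑ i, (x i - μ i) ^ 2}
      ≤ exp (-(Fintype.card ι * s ^ 2)) := by
  have hv0 : (0 : ℝ) < v := by positivity
  have hl : 2 * (s / ((1 + 2 * s) * v)) * v < 1 := by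
    rw [show 2 * (s / ((1 + 2 * s) * v)) * v = 2 * s / (1 + 2 * s) by field_simp,
      div_lt_one (by positivity)]
    linarith
  refine (measureReal_sum_sq_sub_ge_le_exp μ hv (by positivity) hl _).trans ?_
  rw [exp_le_exp, show 1 - 2 * (s / ((1 + 2 * s) * v)) * v = (1 + 2 * s)⁻¹ by field_simp; ring,
    log_inv]
  have hlog := log_one_add_le_of_nonneg (x := 2 * s) (by positivity)
  have hN : (0 : ℝ) ≤ Fintype.card ι := Nat.cast_nonneg _
  have key : s / ((1 + 2 * s) * v) * (Fintype.card ι * v * (1 + 2 * s + 2 * s ^ 2))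
      = Fintype.card ι * s ^ 2
        + Fintype.card ι * (2 * s * (2 * s + 2) / (2 * (2 * s + 1))) / 2 := by
    field_simp
    ring
  rw [key]
  nlinarith

lemma measureReal_sum_sq_sub_lower_tail_le (hv : v ≠ 0) {s : ℝ} (hs : 0 ≤ s) :
    (Measure.pi fun i => gaussianReal (μ i) v).real
        {x | ∑ i, (x i - μ i) ^ 2 ≤ Fintype.card ι * v * (1 - 2 * s)}
      ≤ exp (-(Fintype.card ι * s ^ 2)) := by
  have hv0 : (0 : ℝ) < v := by positivity
  refine (measureReal_sum_sq_sub_le_le_exp μ hv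
    (l := -s / v) (div_nonpos_of_nonpos_of_nonneg (by linarith) hv0.le) _).trans ?_
  rw [exp_le_exp, show 1 - 2 * (-s / v) * v = 1 + 2 * s by field_simp; ring]
  have hlog := le_log_one_add_of_nonneg (x := 2 * s) (by positivity)
  have hN : (0 : ℝ) ≤ Fintype.card ι := Nat.cast_nonneg _
  have hquad : s - s ^ 2 ≤ 2 * (2 * s) / (2 * s + 2) / 2 := by
    rw [← sub_nonneg, show 2 * (2 * s) / (2 * s + 2) / 2 - (s - s ^ 2) = s ^ 3 / (s + 1) by
      field_simp; ring]
    positivity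
  rw [show -s / v * (Fintype.card ι * v * (1 - 2 * s)) = -(Fintype.card ι * (s - 2 * s ^ 2)) by
    field_simp]
  nlinarith

end pi

lemma one_sub_add_le_measureReal {Ω : Type*} [MeasurableSpace Ω] {P : Measure Ω}
    [IsProbabilityMeasure P] {A B S : Set Ω} {a b : ℝ} (hA : P.real A ≤ a) (hB : P.real B ≤ b)
    (h : ∀ x, x ∉ A → x ∉ B → x ∈ S) :
    1 - (a + b) ≤ P.real S := by
  have hcompl : Sᶜ ⊆ A ∪ B := fun x hx => by
    by_contra hAB
    simp only [Set.mem_union, not_or] at hAB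
    exact hx (h x hAB.1 hAB.2)
  have := measureReal_union_le (μ := P) S Sᶜ
  rw [Set.union_compl_self, probReal_univ] at this
  linarith [measureReal_mono (μ := P) hcompl, measureReal_union_le (μ := P) A B]

lemma mul_le_sqrt_and_sqrt_le_mul {z r α β e : ℝ} (hr : 0 ≤ r) (hα : 1 - e ≤ √α)
    (hβ : √β ≤ 1 + e) (hαz : r ^ 2 * α ≤ z) (hzβ : z ≤ r ^ 2 * β) :
    (1 - e) * r ≤ √z ∧ √z ≤ (1 + e) * r := by
  have hsqrt : ∀ γ, √(r ^ 2 * γ) = √γ * r := fun γ => by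
    rw [sqrt_mul (sq_nonneg r), sqrt_sq hr, mul_comm]
  constructor
  · calc (1 - e) * r ≤ √α * r := mul_le_mul_of_nonneg_right hα hr
      _ = √(r ^ 2 * α) := (hsqrt α).symm
      _ ≤ √z := sqrt_le_sqrt hαz
  · calc √z ≤ √(r ^ 2 * β) := sqrt_le_sqrt hzβ
      _ = √β * r := hsqrt β
      _ ≤ (1 + e) * r := mul_le_mul_of_nonneg_right hβ hr

/-- Concentration of an isotropic Gaussian near the sphere of radius `r = √n·σ`: for
`ε ∈ [0, 1/4]` and `ε_max = max (1 - √(1 - 2√ε)) (√(1 + 2√ε + 2ε) - 1)`,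
`P((1 - ε_max)·r ≤ ‖x - μ‖ ≤ (1 + ε_max)·r) ≥ 1 - 2e^(-nε)`. -/
theorem isoGaussian_sphere_concentration {n : ℕ} (μ : Fin n → ℝ) (σ : ℝ) (hσ : 0 < σ)
    (ε : ℝ) (hε : ε ∈ Set.Icc (0 : ℝ) (1 / 4)) :
    ENNReal.ofReal (1 - 2 * Real.exp (-(n * ε)))
      ≤ isoGaussian n μ σ
          {x | (1 - max (1 - Real.sqrt (1 - 2 * Real.sqrt ε))
                    (Real.sqrt (1 + 2 * Real.sqrt ε + 2 * ε) - 1)) * (Real.sqrt n * σ)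
                 ≤ Real.sqrt (∑ i, (x i - μ i) ^ 2) ∧
               Real.sqrt (∑ i, (x i - μ i) ^ 2)
                 ≤ (1 + max (1 - Real.sqrt (1 - 2 * Real.sqrt ε))
                    (Real.sqrt (1 + 2 * Real.sqrt ε + 2 * ε) - 1)) * (Real.sqrt n * σ)} := by
  obtain ⟨s, hs, rfl⟩ : ∃ s, 0 ≤ s ∧ ε = s ^ 2 := ⟨√ε, sqrt_nonneg ε, (sq_sqrt hε.1).symm⟩
  rw [sqrt_sq hs, isoGaussian]
  -- Instance search does not see through the anonymous constructor, but does see a variable.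
  set v : ℝ≥0 := ⟨σ ^ 2, sq_nonneg σ⟩
  have hv : v ≠ 0 := NNReal.coe_ne_zero.1 (pow_ne_zero 2 hσ.ne')
  have hnv : (Fintype.card (Fin n) : ℝ) * v = (√n * σ) ^ 2 := by
    rw [Fintype.card_fin, mul_pow, sq_sqrt n.cast_nonneg]
    rfl
  rw [← ofReal_measureReal]
  refine ENNReal.ofReal_le_ofReal ((le_of_eq ?_).trans (one_sub_add_le_measureReal
    (measureReal_sum_sq_sub_lower_tail_le μ hv hs)
    (measureReal_sum_sq_sub_upper_tail_le μ hv hs) fun x hA hB => ?_))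
  · rw [Fintype.card_fin]
    ring
  · simp only [Set.mem_ofPred_eq, not_le, hnv] at hA hB
    exact mul_le_sqrt_and_sqrt_le_mul (by positivity)
      (by linarith [le_max_left (1 - √(1 - 2 * s)) (√(1 + 2 * s + 2 * s ^ 2) - 1)])
      (by linarith [le_max_right (1 - √(1 - 2 * s)) (√(1 + 2 * s + 2 * s ^ 2) - 1)]) hA.le hB.le
end
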